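/- arXiv:2504.04233 — 5 statements merged into one kernel-verified Lean document; each statement's English description precedes it below -/
import Mathlib

section
/- Let G be a finite simple graph and let u, v be distinct vertices each of degree at least 2, and let C = V(G) − {u,v}. Then C completely floods G if and only if {u,v} is not a trigger, i.e., it is not the case that u and v are adjacent and both have degree exactly 2. -/
/-!
Every vertex outside `{u, v}` is already in the set, so everything hinges on whether `u` and
`v` are reached. A vertex of `{u, v}` sees all its neighbours except possibly the
other one, so it is reached in one step unless it has degree `2` and is adjacent to the other
vertex. If this blocks both, the set is a fixed point of the cascade; if it blocks only `v`,
then `u` is reached first and `v` then sees all of its neighbours.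
-/

open scoped Classical

noncomputable def floodStep {V : Type*} (G : SimpleGraph V) [Fintype V]
    (C : Finset V) : Finset V :=
  C ∪ Finset.univ.filter (fun x => 2 ≤ (C.filter (fun y => G.Adj x y)).card)

/-- Since `floodStep` is inflationary, this is equivalent to the cascade stabilizing to `univ`. -/
def Floods {V : Type*} (G : SimpleGraph V) [Fintype V] (C : Finset V) : Prop :=
  ∃ k, (floodStep G)^[k] C = Finset.univ

noncomputable def floodPoly {V : Type*} (G : SimpleGraph V) [Fintype V] :
    Polynomial ℕ :=
  ∑ C ∈ Finset.univ.filter (fun C : Finset V => Floods G C), Polynomial.X ^ C.card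

noncomputable def deg {V : Type*} (G : SimpleGraph V) [Fintype V] (v : V) : ℕ :=
  (Finset.univ.filter (fun y => G.Adj v y)).card

open Finset

section Cascade

variable {V : Type*} [Fintype V] (G : SimpleGraph V)

lemma subset_floodStep (C : Finset V) : C ⊆ floodStep G C := subset_union_left

lemma mem_floodStep {C : Finset V} {x : V} :
    x ∈ floodStep G C ↔ x ∈ C ∨ 2 ≤ #(C.filter (G.Adj x)) := by
  simp [floodStep]

lemma floodStep_mono : Monotone (floodStep G) := fun C D hCD x hx => by
  rw [mem_floodStep] at hx ⊢
  exact hx.imp (@hCD x) fun h => h.trans (card_le_card (filter_subset_filter _ hCD))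

variable {G}

lemma Floods.mono {C D : Finset V} (hC : Floods G C) (hCD : C ⊆ D) : Floods G D := by
  obtain ⟨k, hk⟩ := hC
  exact ⟨k, univ_subset_iff.1 (hk ▸ (floodStep_mono G).iterate k hCD)⟩

lemma floods_of_floods_floodStep {C : Finset V} (h : Floods G (floodStep G C)) : Floods G C := by
  obtain ⟨k, hk⟩ := h
  exact ⟨k + 1, by rwa [Function.iterate_succ_apply]⟩

lemma floods_of_floodStep_eq_univ {C : Finset V} (h : floodStep G C = univ) : Floods G C :=
  floods_of_floods_floodStep ⟨0, h⟩

lemma not_floods_of_floodStep_eq {C : Finset V} {x : V} (hfix : floodStep G C = C)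
    (hx : x ∉ C) : ¬ Floods G C := by
  rintro ⟨k, hk⟩
  rw [Function.iterate_fixed hfix] at hk
  exact hx (hk ▸ mem_univ x)

end Cascade

section ComplPair

variable {V : Type*} [Fintype V] (G : SimpleGraph V)

lemma card_filter_adj_compl_pair_add (u v : V) :
    #((univ \ {u, v}).filter (G.Adj u)) + (if G.Adj u v then 1 else 0) = deg G u := by
  have hfilter : (univ \ {u, v}).filter (G.Adj u) = (univ.filter (G.Adj u)).erase v := by
    ext w
    simp only [mem_filter, mem_sdiff, mem_erase, mem_univ, mem_insert, mem_singleton, true_and]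
    constructor
    · rintro ⟨hw, hadj⟩
      exact ⟨fun h => hw (Or.inr h), hadj⟩
    · rintro ⟨hwv, hadj⟩
      exact ⟨fun h => h.elim (fun h => G.irrefl (h ▸ hadj)) hwv, hadj⟩
  rw [hfilter, deg]
  split_ifs with hadj
  · exact card_erase_add_one (by simpa using hadj)
  · rw [erase_eq_of_notMem (by simpa using hadj), add_zero]

lemma mem_floodStep_compl_pair_iff (u v : V) :
    u ∈ floodStep G (univ \ {u, v}) ↔ 2 + (if G.Adj u v then 1 else 0) ≤ deg G u := by
  have hcard := card_filter_adj_compl_pair_add G u v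
  rw [mem_floodStep, or_iff_right (by simp)]
  split_ifs at hcard ⊢ <;> omega

lemma floodStep_compl_pair_of_trigger {u v : V} (hadj : G.Adj u v) (hu : deg G u = 2)
    (hv : deg G v = 2) : floodStep G (univ \ {u, v}) = univ \ {u, v} := by
  refine (subset_floodStep G _).antisymm' fun x hx => ?_
  by_contra hxC
  have hx' : x = u ∨ x = v := by simpa [or_iff_not_imp_left] using hxC
  rcases hx' with rfl | rfl
  · have := (mem_floodStep_compl_pair_iff G x v).1 hx
    simp only [hadj, if_true] at this
    omega
  · rw [pair_comm] at hx
    have := (mem_floodStep_compl_pair_iff G x u).1 hx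
    simp only [hadj.symm, if_true] at this
    omega

lemma floodStep_compl_pair_of_not_adj {u v : V} (hadj : ¬ G.Adj u v) (hu : 2 ≤ deg G u)
    (hv : 2 ≤ deg G v) : floodStep G (univ \ {u, v}) = univ := by
  have hu' := (mem_floodStep_compl_pair_iff G u v).2 (by simpa [hadj] using hu)
  have hv' := (mem_floodStep_compl_pair_iff G v u).2 (by simpa [G.adj_comm, hadj] using hv)
  rw [pair_comm] at hv'
  refine eq_univ_of_forall fun x => ?_
  by_cases hx : x = u ∨ x = v
  · rcases hx with rfl | rfl
    exacts [hu', hv']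
  · exact subset_floodStep G _ (by simpa using hx)

lemma floods_compl_pair_of_adj {u v : V} (hadj : G.Adj u v) (hu : 3 ≤ deg G u)
    (hv : 2 ≤ deg G v) : Floods G (univ \ {u, v}) := by
  have hu' := (mem_floodStep_compl_pair_iff G u v).2 (by simpa [hadj] using hu)
  -- `{v, v}` is a non-adjacent pair since `G` is loopless, so `univ \ {v}` floods in one step.
  have hstep : univ \ {v, v} ⊆ floodStep G (univ \ {u, v}) := fun x hx => by
    by_cases hxu : x = u
    · exact hxu ▸ hu'
    · exact subset_floodStep G _ (by simp_all)
  exact floods_of_floods_floodStep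
    ((floods_of_floodStep_eq_univ (floodStep_compl_pair_of_not_adj G G.irrefl hv hv)).mono
      hstep)

end ComplPair

theorem floods_compl_pair_iff_not_trigger_general {V : Type*} [Fintype V]
    (G : SimpleGraph V) (u v : V)
    (hu : 2 ≤ deg G u) (hv : 2 ≤ deg G v) :
    Floods G (Finset.univ \ {u, v}) ↔
      ¬ (G.Adj u v ∧ deg G u = 2 ∧ deg G v = 2) := by
  constructor
  · rintro hfloods ⟨hadj, hu2, hv2⟩
    exact not_floods_of_floodStep_eq (floodStep_compl_pair_of_trigger G hadj hu2 hv2)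
      (x := u) (by simp) hfloods
  · intro hnot
    by_cases hadj : G.Adj u v
    · have hdeg := not_and.1 hnot hadj
      rcases (by omega : 3 ≤ deg G u ∨ 3 ≤ deg G v) with hu3 | hv3
      · exact floods_compl_pair_of_adj G hadj hu3 hv
      · rw [pair_comm]
        exact floods_compl_pair_of_adj G hadj.symm hv3 hu
    · exact floods_of_floodStep_eq_univ (floodStep_compl_pair_of_not_adj G hadj hu hv)

theorem floods_compl_pair_iff_not_trigger {V : Type*} [Fintype V]
    (G : SimpleGraph V) (u v : V) (huv : u ≠ v)
    (hu : 2 ≤ deg G u) (hv : 2 ≤ deg G v) :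
    Floods G (Finset.univ \ {u, v}) ↔
      ¬ (G.Adj u v ∧ deg G u = 2 ∧ deg G v = 2) :=
  floods_compl_pair_iff_not_trigger_general G u v hu hv
end

section
/- Let s be the number of free vertices of a finite simple graph G. Then (x+1)^s divides the flood polynomial F_G(x). -/
open scoped Classical
open Polynomial

lemma floodStep_mono_s9 {V : Type*} (G : SimpleGraph V) [Fintype V]
    {C D : Finset V} (h : C ⊆ D) : floodStep G C ⊆ floodStep G D := by
  apply Finset.union_subset_union h
  intro x hx
  rw [Finset.mem_filter] at hx ⊢
  exact ⟨hx.1, hx.2.trans (Finset.card_le_card (Finset.filter_subset_filter _ h))⟩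

lemma floods_mono {V : Type*} (G : SimpleGraph V) [Fintype V]
    {C D : Finset V} (h : C ⊆ D) (hC : Floods G C) : Floods G D := by
  obtain ⟨k, hk⟩ := hC
  have hsub : ∀ n, (floodStep G)^[n] C ⊆ (floodStep G)^[n] D := by
    intro n
    induction n with
    | zero => exact h
    | succ n ih =>
      rw [Function.iterate_succ_apply', Function.iterate_succ_apply']
      exact floodStep_mono_s9 G ih
  refine ⟨k, Finset.univ_subset_iff.mp ?_⟩
  rw [← hk]
  exact hsub k

lemma exists_min_floods {V : Type*} (G : SimpleGraph V) [Fintype V]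
    (C : Finset V) (hC : Floods G C) :
    ∃ D ⊆ C, Floods G D ∧ ∀ E ⊂ D, ¬ Floods G E := by
  induction C using Finset.strongInduction with
  | _ C ih =>
    by_cases h : ∀ E ⊂ C, ¬ Floods G E
    · exact ⟨C, subset_rfl, hC, h⟩
    · push_neg at h
      obtain ⟨E, hE, hEf⟩ := h
      obtain ⟨D, hD, hDf, hmin⟩ := ih E hE hEf
      exact ⟨D, hD.trans hE.subset, hDf, hmin⟩

theorem free_vertices_pow_dvd_floodPoly {V : Type*} [Fintype V]
    (G : SimpleGraph V) :
    (Polynomial.X + 1) ^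
        (Finset.univ.filter (fun v : V =>
          ∀ C : Finset V, Floods G C → (∀ D ⊂ C, ¬ Floods G D) → v ∉ C)).card ∣
      floodPoly G := by
  set S : Finset V := Finset.univ.filter (fun v : V =>
    ∀ C : Finset V, Floods G C → (∀ D ⊂ C, ¬ Floods G D) → v ∉ C) with hS
  -- key equivalence
  have key : ∀ C : Finset V, Floods G C ↔ Floods G (C \ S) := by
    intro C
    constructor
    · intro hC
      obtain ⟨D, hDC, hDf, hmin⟩ := exists_min_floods G C hC
      refine floods_mono G (fun v hv => ?_) hDf
      rw [Finset.mem_sdiff]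
      refine ⟨hDC hv, fun hvS => ?_⟩
      rw [hS, Finset.mem_filter] at hvS
      exact hvS.2 D hDf hmin hv
    · exact floods_mono G (Finset.sdiff_subset)
  -- decompose the sum
  have hsum : floodPoly G =
      ∑ p ∈ ((Finset.univ \ S).powerset.filter (fun B => Floods G B)) ×ˢ S.powerset,
        (Polynomial.X : Polynomial ℕ) ^ p.1.card * Polynomial.X ^ p.2.card := by
    rw [floodPoly]
    refine Finset.sum_nbij' (fun C => (C \ S, C ∩ S)) (fun p => p.1 ∪ p.2)
      ?_ ?_ ?_ ?_ ?_
    · intro C hC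
      rw [Finset.mem_filter] at hC
      rw [Finset.mem_product, Finset.mem_filter, Finset.mem_powerset, Finset.mem_powerset]
      exact ⟨⟨Finset.sdiff_subset_sdiff (Finset.subset_univ C) subset_rfl,
        (key C).1 hC.2⟩, Finset.inter_subset_right⟩
    · intro p hp
      rw [Finset.mem_product, Finset.mem_filter, Finset.mem_powerset, Finset.mem_powerset] at hp
      rw [Finset.mem_filter]
      exact ⟨Finset.mem_univ _, floods_mono G Finset.subset_union_left hp.1.2⟩
    · intro C hC
      exact Finset.sdiff_union_inter C S
    · intro p hp
      rw [Finset.mem_product, Finset.mem_filter, Finset.mem_powerset, Finset.mem_powerset] at hp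
      have h1 : Disjoint p.1 S := by
        have := hp.1.1
        intro t ht1 ht2 v hv
        have := this (ht1 hv)
        rw [Finset.mem_sdiff] at this
        exact absurd (ht2 hv) this.2
      refine Prod.ext ?_ ?_
      · show (p.1 ∪ p.2) \ S = p.1
        rw [Finset.union_sdiff_distrib, Finset.sdiff_eq_self_of_disjoint h1,
          Finset.sdiff_eq_empty_iff_subset.2 hp.2, Finset.union_empty]
      · show (p.1 ∪ p.2) ∩ S = p.2
        rw [Finset.union_inter_distrib_right, Finset.inter_eq_left.2 hp.2,
          Finset.disjoint_iff_inter_eq_empty.1 h1, Finset.empty_union]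
    · intro C hC
      rw [← pow_add, ← Finset.card_union_of_disjoint, Finset.sdiff_union_inter]
      exact Finset.disjoint_sdiff_inter C S
  rw [hsum, Finset.sum_product]
  have hpow : ∑ T ∈ S.powerset, (Polynomial.X : Polynomial ℕ) ^ T.card
      = (Polynomial.X + 1) ^ S.card := by
    rw [← Finset.prod_const, Finset.prod_add]
    apply Finset.sum_congr rfl
    intro T hT
    simp [Finset.prod_const]
  have hinner : ∀ B : Finset V, ∑ T ∈ S.powerset,
      (Polynomial.X : Polynomial ℕ) ^ B.card * Polynomial.X ^ T.card
      = Polynomial.X ^ B.card * (Polynomial.X + 1) ^ S.card := by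
    intro B
    rw [← Finset.mul_sum, hpow]
  rw [Finset.sum_congr rfl (fun B _ => hinner B), ← Finset.sum_mul]
  exact dvd_mul_left _ _
end

section
/- In the parallel path graph P_{m,n} (the m × n grid graph), every completely flooding cascade set contains at least one vertex of the first column {v_{1,1},…,v_{m,1}} and at least one vertex of the last column {v_{1,n},…,v_{m,n}}. -/
open scoped Classical
open Polynomial

lemma flood_avoid_col {m n : ℕ} (j : Fin n)
    (huniq : ∀ a b : Fin n, (SimpleGraph.pathGraph n).Adj j a →
      (SimpleGraph.pathGraph n).Adj j b → a = b)
    (S : Finset (Fin m × Fin n)) (hS : ∀ i : Fin m, (i, j) ∉ S) :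
    ∀ i : Fin m, (i, j) ∉ floodStep (SimpleGraph.pathGraph m □ SimpleGraph.pathGraph n) S := by
  intro i hmem
  unfold floodStep at hmem
  rcases (@Finset.mem_union _ (fun a b => Classical.propDecidable _) _ _ _).1 hmem with hx | hx
  · exact hS i hx
  · rw [Finset.mem_filter] at hx
    obtain ⟨y, hy, z, hz, hyz⟩ :=
      Finset.one_lt_card.1 (lt_of_lt_of_le one_lt_two hx.2)
    rw [Finset.mem_filter] at hy hz
    obtain ⟨hyS, hyA⟩ := hy
    obtain ⟨hzS, hzA⟩ := hz
    apply hyz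
    obtain ⟨y1, y2⟩ := y
    obtain ⟨z1, z2⟩ := z
    rw [SimpleGraph.boxProd_adj] at hyA hzA
    rcases hyA with ⟨_, hb⟩ | ⟨hb, ha⟩
    · exact absurd hyS (by subst hb; exact hS y1)
    · rcases hzA with ⟨_, hb'⟩ | ⟨hb', ha'⟩
      · exact absurd hzS (by subst hb'; exact hS z1)
      · simp only at ha hb ha' hb'
        rw [← ha, ← ha', huniq y2 z2 hb hb']


theorem grid_floods_meets_first_and_last_column (m n : ℕ) (hm : 0 < m) (hn : 0 < n)
    (C : Finset (Fin m × Fin n))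
    (h : Floods (SimpleGraph.pathGraph m □ SimpleGraph.pathGraph n) C) :
    (∃ i : Fin m, (i, (⟨0, hn⟩ : Fin n)) ∈ C) ∧
      (∃ i : Fin m, (i, (⟨n - 1, by omega⟩ : Fin n)) ∈ C) := by
  have key : ∀ (j : Fin n),
      (∀ a b : Fin n, (SimpleGraph.pathGraph n).Adj j a →
        (SimpleGraph.pathGraph n).Adj j b → a = b) →
      ∃ i : Fin m, (i, j) ∈ C := by
    intro j huniq
    by_contra hc
    push_neg at hc
    obtain ⟨k, hk⟩ := h
    have hiter : ∀ k i, (i, j) ∉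
        (floodStep (SimpleGraph.pathGraph m □ SimpleGraph.pathGraph n))^[k] C := by
      intro k
      induction k with
      | zero => simpa using hc
      | succ k ih =>
          rw [Function.iterate_succ_apply']
          exact flood_avoid_col j huniq _ ih
    exact hiter k ⟨0, hm⟩ (hk ▸ Finset.mem_univ _)
  constructor
  · refine key _ ?_
    intro a b ha hb
    rw [SimpleGraph.pathGraph_adj] at ha hb
    have h1 := a.isLt
    have h2 := b.isLt
    apply Fin.ext
    simp only [Fin.val_mk] at ha hb
    omega
  · refine key _ ?_
    intro a b ha hb
    rw [SimpleGraph.pathGraph_adj] at ha hb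
    have h1 := a.isLt
    have h2 := b.isLt
    apply Fin.ext
    simp only [Fin.val_mk] at ha hb
    omega
end

section
/- The flood polynomials of path graphs satisfy the Fibonacci-type recurrence: F_{P_1}(x) = x, F_{P_2}(x) = x², and for n ≥ 3, F_{P_n}(x) = x·F_{P_{n-1}}(x) + x·F_{P_{n-2}}(x). -/
open scoped Classical
open Polynomial

/-- Good configurations in Fin-land. -/
def GoodF (n : ℕ) (C : Finset (Fin n)) : Prop :=
  (∀ x : Fin n, x.val = 0 → x ∈ C) ∧ (∀ x : Fin n, x.val + 1 = n → x ∈ C) ∧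
  ∀ x y : Fin n, x.val + 1 = y.val → x ∈ C ∨ y ∈ C

open SimpleGraph Finset

lemma mem_floodStep_s13 {n : ℕ} {S : Finset (Fin n)} {x : Fin n} :
    x ∈ floodStep (pathGraph n) S ↔
      x ∈ S ∨ 2 ≤ (S.filter (fun y => (pathGraph n).Adj x y)).card := by
  simp [floodStep]

lemma endpoint_card_le_one {n : ℕ} (S : Finset (Fin n)) {x : Fin n}
    (hx : x.val = 0 ∨ x.val + 1 = n) :
    (S.filter (fun y => (pathGraph n).Adj x y)).card ≤ 1 := by
  apply Finset.card_le_one.2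
  intro a ha b hb
  simp only [Finset.mem_filter, pathGraph_adj] at ha hb
  have hav := a.isLt; have hbv := b.isLt
  apply Fin.ext
  rcases hx with hx | hx <;> omega

lemma endpoint_not_mem_iterate {n : ℕ} (C : Finset (Fin n)) {x : Fin n}
    (hx : x.val = 0 ∨ x.val + 1 = n) (h : x ∉ C) (k : ℕ) :
    x ∉ (floodStep (pathGraph n))^[k] C := by
  induction k with
  | zero => simpa
  | succ k ih =>
    rw [Function.iterate_succ_apply', mem_floodStep_s13]
    push_neg
    refine ⟨ih, ?_⟩
    have := endpoint_card_le_one ((floodStep (pathGraph n))^[k] C) hx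
    omega

lemma pair_not_mem_iterate {n : ℕ} (C : Finset (Fin n)) {x y : Fin n}
    (hxy : x.val + 1 = y.val) (hx : x ∉ C) (hy : y ∉ C) (k : ℕ) :
    x ∉ (floodStep (pathGraph n))^[k] C ∧ y ∉ (floodStep (pathGraph n))^[k] C := by
  induction k with
  | zero => simpa using ⟨hx, hy⟩
  | succ k ih =>
    obtain ⟨ihx, ihy⟩ := ih
    set S := (floodStep (pathGraph n))^[k] C with hS
    rw [Function.iterate_succ_apply', ← hS]
    constructor
    · rw [mem_floodStep_s13]; push_neg
      refine ⟨ihx, ?_⟩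
      have hle : (S.filter (fun z => (pathGraph n).Adj x z)).card ≤ 1 := by
        apply Finset.card_le_one.2
        intro a ha b hb
        simp only [Finset.mem_filter, pathGraph_adj] at ha hb
        have : a ≠ y := by rintro rfl; exact ihy ha.1
        have : b ≠ y := by rintro rfl; exact ihy hb.1
        have hay : a.val ≠ y.val := fun h => ‹a ≠ y› (Fin.ext h)
        have hby : b.val ≠ y.val := fun h => ‹b ≠ y› (Fin.ext h)
        apply Fin.ext
        omega
      omega
    · rw [mem_floodStep_s13]; push_neg
      refine ⟨ihy, ?_⟩
      have hle : (S.filter (fun z => (pathGraph n).Adj y z)).card ≤ 1 := by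
        apply Finset.card_le_one.2
        intro a ha b hb
        simp only [Finset.mem_filter, pathGraph_adj] at ha hb
        have : a ≠ x := by rintro rfl; exact ihx ha.1
        have : b ≠ x := by rintro rfl; exact ihx hb.1
        have hax : a.val ≠ x.val := fun h => ‹a ≠ x› (Fin.ext h)
        have hbx : b.val ≠ x.val := fun h => ‹b ≠ x› (Fin.ext h)
        apply Fin.ext
        omega
      omega

lemma floods_iff_goodF (n : ℕ) (C : Finset (Fin n)) :
    Floods (pathGraph n) C ↔ GoodF n C := by
  constructor
  · rintro ⟨k, hk⟩
    refine ⟨?_, ?_, ?_⟩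
    · intro x hx
      by_contra h
      exact endpoint_not_mem_iterate C (Or.inl hx) h k (hk ▸ Finset.mem_univ x)
    · intro x hx
      by_contra h
      exact endpoint_not_mem_iterate C (Or.inr hx) h k (hk ▸ Finset.mem_univ x)
    · intro x y hxy
      by_contra h
      push_neg at h
      exact (pair_not_mem_iterate C hxy h.1 h.2 k).1 (hk ▸ Finset.mem_univ x)
  · rintro ⟨h0, h1, hpair⟩
    refine ⟨1, ?_⟩
    rw [Function.iterate_one]
    apply Finset.eq_univ_of_forall
    intro x
    by_cases hxC : x ∈ C
    · exact mem_floodStep_s13.2 (Or.inl hxC)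
    have hx0 : x.val ≠ 0 := fun h => hxC (h0 x h)
    have hx1 : x.val + 1 ≠ n := fun h => hxC (h1 x h)
    have hlt := x.isLt
    set p : Fin n := ⟨x.val - 1, by omega⟩ with hp
    set s : Fin n := ⟨x.val + 1, by omega⟩ with hs
    have hpC : p ∈ C := by
      rcases hpair p x (by simp [hp]; omega) with h | h
      · exact h
      · exact absurd h hxC
    have hsC : s ∈ C := by
      rcases hpair x s (by simp [hs]) with h | h
      · exact absurd h hxC
      · exact h
    apply mem_floodStep_s13.2
    right
    have hsub : ({p, s} : Finset (Fin n)) ⊆ C.filter (fun y => (pathGraph n).Adj x y) := by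
      intro a ha
      simp only [Finset.mem_insert, Finset.mem_singleton] at ha
      rcases ha with rfl | rfl
      · simp only [Finset.mem_filter]; exact ⟨hpC, pathGraph_adj.2 (Or.inr (by simp [hp]; omega))⟩
      · simp only [Finset.mem_filter]; exact ⟨hsC, pathGraph_adj.2 (Or.inl (by simp [hs]))⟩
    have hps : p ≠ s := by
      simp only [hp, hs, Ne, Fin.mk.injEq]
      omega
    calc 2 = ({p, s} : Finset (Fin n)).card := (Finset.card_pair hps).symm
    _ ≤ _ := Finset.card_le_card hsub

def goodN (n : ℕ) (S : Finset ℕ) : Prop :=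
  0 ∈ S ∧ n - 1 ∈ S ∧ ∀ i ∈ Finset.range n, i + 1 < n → (i ∈ S ∨ i + 1 ∈ S)

instance goodN.dec (n : ℕ) : DecidablePred (goodN n) := fun S => by
  unfold goodN; infer_instance

def goodFinset (n : ℕ) : Finset (Finset ℕ) :=
  ((Finset.range n).powerset).filter (goodN n)

lemma mem_goodFinset {n : ℕ} {S : Finset ℕ} :
    S ∈ goodFinset n ↔ S ⊆ Finset.range n ∧ goodN n S := by
  simp [goodFinset]

lemma floodPoly_eq_goodsum (n : ℕ) (hn : 1 ≤ n) :
    floodPoly (pathGraph n) = ∑ S ∈ goodFinset n, (Polynomial.X : Polynomial ℕ) ^ S.card := by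
  rw [floodPoly,
    Finset.filter_congr (fun C _ => (floods_iff_goodF n C))]
  refine Finset.sum_nbij' (fun C => C.image Fin.val)
    (fun S => Finset.univ.filter (fun x : Fin n => x.val ∈ S)) ?_ ?_ ?_ ?_ ?_
  · intro C hC
    rw [Finset.mem_filter] at hC
    obtain ⟨-, h0, h1, hp⟩ := hC
    rw [mem_goodFinset]
    refine ⟨?_, ?_, ?_, ?_⟩
    · intro m hm
      obtain ⟨x, -, rfl⟩ := Finset.mem_image.1 hm
      exact Finset.mem_range.2 x.isLt
    · exact Finset.mem_image.2 ⟨⟨0, hn⟩, h0 _ rfl, rfl⟩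
    · exact Finset.mem_image.2 ⟨⟨n - 1, by omega⟩, h1 _ (by simp; omega), rfl⟩
    · intro i _ hilt
      rcases hp ⟨i, by omega⟩ ⟨i + 1, hilt⟩ rfl with h | h
      · exact Or.inl (Finset.mem_image.2 ⟨_, h, rfl⟩)
      · exact Or.inr (Finset.mem_image.2 ⟨_, h, rfl⟩)
  · intro S hS
    rw [mem_goodFinset] at hS
    obtain ⟨hsub, h0, h1, hp⟩ := hS
    rw [Finset.mem_filter]
    refine ⟨Finset.mem_univ _, ?_, ?_, ?_⟩
    · intro x hx
      simp only [Finset.mem_filter, Finset.mem_univ, true_and, hx]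
      exact h0
    · intro x hx
      simp only [Finset.mem_filter, Finset.mem_univ, true_and]
      have : x.val = n - 1 := by omega
      rw [this]; exact h1
    · intro x y hxy
      rcases hp x.val (Finset.mem_range.2 x.isLt) (by rw [hxy]; exact y.isLt) with h | h
      · exact Or.inl (by simp only [Finset.mem_filter, Finset.mem_univ, true_and]; exact h)
      · refine Or.inr ?_
        simp only [Finset.mem_filter, Finset.mem_univ, true_and]
        rw [← hxy]
        exact h
  · intro C _
    ext x
    simp only [Finset.mem_filter, Finset.mem_univ, true_and, Finset.mem_image]
    constructor
    · rintro ⟨y, hy, h⟩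
      rwa [show y = x from Fin.ext h] at hy
    · intro h; exact ⟨x, h, rfl⟩
  · intro S hS
    rw [mem_goodFinset] at hS
    ext m
    simp only [Finset.mem_image, Finset.mem_filter, Finset.mem_univ, true_and]
    constructor
    · rintro ⟨x, hx, rfl⟩; exact hx
    · intro hm
      exact ⟨⟨m, Finset.mem_range.1 (hS.1 hm)⟩, hm, rfl⟩
  · intro C _
    rw [Finset.card_image_of_injective _ Fin.val_injective]

lemma good_sum_rec (n : ℕ) (hn : 3 ≤ n) :
    ∑ S ∈ goodFinset n, (Polynomial.X : Polynomial ℕ) ^ S.card =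
      Polynomial.X * ∑ S ∈ goodFinset (n - 1), Polynomial.X ^ S.card +
        Polynomial.X * ∑ S ∈ goodFinset (n - 2), Polynomial.X ^ S.card := by
  rw [← Finset.sum_filter_add_sum_filter_not (goodFinset n) (fun S => n - 2 ∈ S)]
  congr 1
  · rw [Finset.mul_sum]
    refine Finset.sum_nbij' (fun S => S.erase (n - 1)) (fun T => insert (n - 1) T)
      ?_ ?_ ?_ ?_ ?_
    · intro S hS
      rw [Finset.mem_filter, mem_goodFinset] at hS
      obtain ⟨⟨hsub, h0, h1, hp⟩, h2⟩ := hS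
      rw [mem_goodFinset]
      refine ⟨?_, ?_, ?_, ?_⟩
      · intro m hm
        rw [Finset.mem_erase] at hm
        have := Finset.mem_range.1 (hsub hm.2)
        exact Finset.mem_range.2 (by omega)
      · exact Finset.mem_erase.2 ⟨by omega, h0⟩
      · have e : n - 1 - 1 = n - 2 := by omega
        rw [e]
        exact Finset.mem_erase.2 ⟨by omega, h2⟩
      · intro i hi hilt
        rw [Finset.mem_range] at hi
        rcases hp i (Finset.mem_range.2 (by omega)) (by omega) with h | h
        · exact Or.inl (Finset.mem_erase.2 ⟨by omega, h⟩)
        · exact Or.inr (Finset.mem_erase.2 ⟨by omega, h⟩)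
    · intro T hT
      rw [mem_goodFinset] at hT
      obtain ⟨hsub, h0, h1, hp⟩ := hT
      have h1' : n - 2 ∈ T := by rwa [show n - 1 - 1 = n - 2 from by omega] at h1
      rw [Finset.mem_filter, mem_goodFinset]
      refine ⟨⟨?_, ?_, ?_, ?_⟩, ?_⟩
      · intro m hm
        rcases Finset.mem_insert.1 hm with rfl | h
        · exact Finset.mem_range.2 (by omega)
        · exact Finset.mem_range.2 (by have := Finset.mem_range.1 (hsub h); omega)
      · exact Finset.mem_insert_of_mem h0
      · exact Finset.mem_insert_self _ _
      · intro i hi hilt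
        by_cases hc : i + 1 < n - 1
        · rcases hp i (Finset.mem_range.2 (by omega)) hc with h | h
          · exact Or.inl (Finset.mem_insert_of_mem h)
          · exact Or.inr (Finset.mem_insert_of_mem h)
        · right
          have : i + 1 = n - 1 := by omega
          rw [this]; exact Finset.mem_insert_self _ _
      · exact Finset.mem_insert_of_mem h1'
    · intro S hS
      rw [Finset.mem_filter, mem_goodFinset] at hS
      exact Finset.insert_erase hS.1.2.2.1
    · intro T hT
      rw [mem_goodFinset] at hT
      apply Finset.erase_insert
      intro h
      have := Finset.mem_range.1 (hT.1 h)
      omega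
    · intro S hS
      rw [Finset.mem_filter, mem_goodFinset] at hS
      have hmem : n - 1 ∈ S := hS.1.2.2.1
      rw [Finset.card_erase_of_mem hmem, ← pow_succ']
      congr 1
      have : 0 < S.card := Finset.card_pos.2 ⟨_, hmem⟩
      omega
  · rw [Finset.mul_sum]
    refine Finset.sum_nbij' (fun S => S.erase (n - 1)) (fun T => insert (n - 1) T)
      ?_ ?_ ?_ ?_ ?_
    · intro S hS
      rw [Finset.mem_filter, mem_goodFinset] at hS
      obtain ⟨⟨hsub, h0, h1, hp⟩, h2⟩ := hS
      rw [mem_goodFinset]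
      refine ⟨?_, ?_, ?_, ?_⟩
      · intro m hm
        rw [Finset.mem_erase] at hm
        have := Finset.mem_range.1 (hsub hm.2)
        have : m ≠ n - 2 := fun e => h2 (e ▸ hm.2)
        exact Finset.mem_range.2 (by omega)
      · exact Finset.mem_erase.2 ⟨by omega, h0⟩
      · have h3 : n - 3 ∈ S := by
          rcases hp (n - 3) (Finset.mem_range.2 (by omega)) (by omega) with h | h
          · exact h
          · exact absurd (by rwa [show n - 3 + 1 = n - 2 by omega] at h) h2
        have e : n - 2 - 1 = n - 3 := by omega
        rw [e]
        exact Finset.mem_erase.2 ⟨by omega, h3⟩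
      · intro i hi hilt
        rw [Finset.mem_range] at hi
        rcases hp i (Finset.mem_range.2 (by omega)) (by omega) with h | h
        · exact Or.inl (Finset.mem_erase.2 ⟨by omega, h⟩)
        · exact Or.inr (Finset.mem_erase.2 ⟨by omega, h⟩)
    · intro T hT
      rw [mem_goodFinset] at hT
      obtain ⟨hsub, h0, h1, hp⟩ := hT
      have h1' : n - 3 ∈ T := by rwa [show n - 2 - 1 = n - 3 from by omega] at h1
      have hT2 : n - 2 ∉ T := fun h => by have := Finset.mem_range.1 (hsub h); omega
      rw [Finset.mem_filter, mem_goodFinset]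
      refine ⟨⟨?_, ?_, ?_, ?_⟩, ?_⟩
      · intro m hm
        rcases Finset.mem_insert.1 hm with rfl | h
        · exact Finset.mem_range.2 (by omega)
        · exact Finset.mem_range.2 (by have := Finset.mem_range.1 (hsub h); omega)
      · exact Finset.mem_insert_of_mem h0
      · exact Finset.mem_insert_self _ _
      · intro i hi hilt
        by_cases hc : i + 1 < n - 2
        · rcases hp i (Finset.mem_range.2 (by omega)) hc with h | h
          · exact Or.inl (Finset.mem_insert_of_mem h)
          · exact Or.inr (Finset.mem_insert_of_mem h)
        · by_cases hc2 : i + 1 = n - 2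
          · left
            have : i = n - 3 := by omega
            rw [this]
            exact Finset.mem_insert_of_mem h1'
          · right
            have : i + 1 = n - 1 := by omega
            rw [this]; exact Finset.mem_insert_self _ _
      · intro h
        rcases Finset.mem_insert.1 h with h' | h'
        · omega
        · exact hT2 h'
    · intro S hS
      rw [Finset.mem_filter, mem_goodFinset] at hS
      exact Finset.insert_erase hS.1.2.2.1
    · intro T hT
      rw [mem_goodFinset] at hT
      apply Finset.erase_insert
      intro h
      have := Finset.mem_range.1 (hT.1 h)
      omega
    · intro S hS
      rw [Finset.mem_filter, mem_goodFinset] at hS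
      have hmem : n - 1 ∈ S := hS.1.2.2.1
      rw [Finset.card_erase_of_mem hmem, ← pow_succ']
      congr 1
      have : 0 < S.card := Finset.card_pos.2 ⟨_, hmem⟩
      omega

theorem floodPoly_path_recurrence :
    floodPoly (SimpleGraph.pathGraph 1) = Polynomial.X ∧
    floodPoly (SimpleGraph.pathGraph 2) = Polynomial.X ^ 2 ∧
    ∀ n : ℕ, 3 ≤ n →
      floodPoly (SimpleGraph.pathGraph n) =
        Polynomial.X * floodPoly (SimpleGraph.pathGraph (n - 1)) +
          Polynomial.X * floodPoly (SimpleGraph.pathGraph (n - 2)) := by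
  refine ⟨?_, ?_, ?_⟩
  · rw [floodPoly_eq_goodsum 1 le_rfl]
    have h : goodFinset 1 = {{0}} := by decide
    rw [h, Finset.sum_singleton]
    norm_num
  · rw [floodPoly_eq_goodsum 2 (by norm_num)]
    have h : goodFinset 2 = {{0, 1}} := by decide
    rw [h, Finset.sum_singleton]
    norm_num
  · intro n hn
    rw [floodPoly_eq_goodsum n (by omega), floodPoly_eq_goodsum (n - 1) (by omega),
      floodPoly_eq_goodsum (n - 2) (by omega)]
    exact good_sum_rec n hn
end

section
/- For n ≥ 3, the flood polynomial of the path on 2n vertices factors as the product of the flood polynomial of the path on n vertices and the flood polynomial of the cycle on n vertices: F_{P_{2n}}(x) = F_{P_n}(x) · F_{O_n}(x). -/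
open scoped Classical
open Polynomial

/-!
In a graph of maximum degree two, an unflooded vertex joins the cascade only once both of its
neighbours have, so `C` floods iff it is a vertex cover containing every vertex of degree `< 2`:
for `P_m` these are the sets containing both ends and missing no two consecutive vertices, for
`O_n` the sets missing no two cyclically consecutive vertices.

Cut a flooding set of `P_{2n}` into its halves `L ⊆ [0, n)` and `H ⊆ [n, 2n)`, shifted to `[0, n)`.
If `n - 1 ∈ L`, then `L` floods `P_n` and `H` floods `O_n` with `n - 1 ∈ H`; otherwise `H` floods
`P_n` and `L` floods `O_n` with `n - 1 ∉ L`. Sizes add, so the two cases together give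
`F_{P_n} · F_{O_n}`.
-/

open Finset SimpleGraph

section Flooding

variable {V : Type*} [Fintype V] {G : SimpleGraph V}

lemma notMem_floodStep {D : Finset V} {v w : V} (hv : v ∉ D) (hw : w ∉ D)
    (h : #(({y | G.Adj v y} : Finset V).erase w) ≤ 1) : v ∉ floodStep G D := by
  have hle : #{y ∈ D | G.Adj v y} ≤ 1 := by
    refine (card_le_card fun u hu => ?_).trans h
    rw [mem_filter] at hu
    exact mem_erase.mpr ⟨by rintro rfl; exact hw hu.1, by simpa using hu.2⟩
  simp only [floodStep, mem_union, mem_filter, mem_univ, true_and, not_or]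
  exact ⟨hv, by omega⟩

theorem not_floods_of_stuck_pair {C : Finset V} {v w : V} (hv : v ∉ C) (hw : w ∉ C)
    (hvw : #(({y | G.Adj v y} : Finset V).erase w) ≤ 1)
    (hwv : #(({y | G.Adj w y} : Finset V).erase v) ≤ 1) : ¬ Floods G C := by
  rintro ⟨k, hk⟩
  have stuck : ∀ j, v ∉ (floodStep G)^[j] C ∧ w ∉ (floodStep G)^[j] C := by
    intro j
    induction j with
    | zero => exact ⟨hv, hw⟩
    | succ j ih =>
      rw [Function.iterate_succ_apply']
      exact ⟨notMem_floodStep ih.1 ih.2 hvw, notMem_floodStep ih.2 ih.1 hwv⟩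
  exact (stuck k).1 (hk ▸ mem_univ v)

theorem floods_iff_of_deg_le_two (hG : ∀ v, deg G v ≤ 2) {C : Finset V} :
    Floods G C ↔ (∀ v, deg G v < 2 → v ∈ C) ∧ ∀ v w, G.Adj v w → v ∈ C ∨ w ∈ C := by
  constructor
  · intro hC
    refine ⟨fun v hv => ?_, fun v w hvw => ?_⟩
    · by_contra hvC
      have h : #(({y | G.Adj v y} : Finset V).erase v) ≤ 1 :=
        card_erase_le.trans (by rw [deg] at hv; omega)
      exact not_floods_of_stuck_pair hvC hvC h h hC
    · by_contra! h
      have erase_le {x y : V} (hxy : G.Adj x y) :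
          #(({u | G.Adj x u} : Finset V).erase y) ≤ 1 := by
        rw [card_erase_of_mem (by simpa using hxy)]
        have := hG x
        rw [deg] at this
        omega
      exact not_floods_of_stuck_pair h.1 h.2 (erase_le hvw) (erase_le hvw.symm) hC
  · rintro ⟨hdeg, hcover⟩
    refine ⟨1, eq_univ_of_forall fun v => ?_⟩
    by_cases hv : v ∈ C
    · exact subset_union_left (s₂ := univ.filter _) hv
    · have hnbrs : {y ∈ C | G.Adj v y} = ({y | G.Adj v y} : Finset V) := by
        ext w
        simpa using fun h => (hcover v w h).resolve_left hv
      have := mt (hdeg v) hv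
      simp only [Function.iterate_one, floodStep, mem_union, mem_filter, mem_univ, true_and]
      rw [hnbrs]
      exact Or.inr (by rw [deg] at this; omega)

end Flooding

theorem floodPoly_eq_sum_powerset_range {m : ℕ} (G : SimpleGraph (Fin m)) (P : Finset ℕ → Prop)
    (hP : ∀ C, Floods G C ↔ P (C.image Fin.val)) :
    floodPoly G = ∑ S ∈ (range m).powerset with P S, X ^ #S := by
  have hrange : range m = (univ : Finset (Fin m)).image Fin.val := by
    ext; simp [Fin.exists_iff]
  rw [floodPoly, hrange, powerset_image, powerset_univ, filter_image,
    sum_image fun _ _ _ _ h => image_injective Fin.val_injective h]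
  simp only [card_image_of_injective _ Fin.val_injective, hP]

section FinVal

variable {m : ℕ}

lemma mem_image_val_iff {C : Finset (Fin m)} {k : ℕ} (hk : k < m) :
    k ∈ C.image Fin.val ↔ (⟨k, hk⟩ : Fin m) ∈ C :=
  Fin.val_injective.mem_finset_image (a := ⟨k, hk⟩) (s := C)

lemma forall_fin_imp_mem_iff (C : Finset (Fin m)) (p : ℕ → Prop) :
    (∀ v : Fin m, p v → v ∈ C) ↔ ∀ k < m, p k → k ∈ C.image Fin.val := by
  simp only [Fin.forall_iff]
  exact forall₂_congr fun k hk => by rw [mem_image_val_iff hk]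

lemma forall_fin_imp_mem_or_mem_iff (C : Finset (Fin m)) (r : ℕ → ℕ → Prop) :
    (∀ u v : Fin m, r u v → u ∈ C ∨ v ∈ C) ↔
      ∀ j < m, ∀ k < m, r j k → j ∈ C.image Fin.val ∨ k ∈ C.image Fin.val := by
  simp only [Fin.forall_iff]
  exact forall₂_congr fun j hj => forall₂_congr fun k hk => by
    rw [mem_image_val_iff hj, mem_image_val_iff hk]

end FinVal

def IsPathCover (m : ℕ) (S : Finset ℕ) : Prop :=
  ∀ k, k + 1 < m → k ∈ S ∨ k + 1 ∈ S

def PathFloods (m : ℕ) (S : Finset ℕ) : Prop :=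
  0 ∈ S ∧ m - 1 ∈ S ∧ IsPathCover m S

def CycleFloods (n : ℕ) (S : Finset ℕ) : Prop :=
  IsPathCover n S ∧ (n - 1 ∈ S ∨ 0 ∈ S)

lemma isPathCover_iff {m : ℕ} {S : Finset ℕ} :
    IsPathCover m S ↔ ∀ j < m, ∀ k < m, j + 1 = k ∨ k + 1 = j → j ∈ S ∨ k ∈ S := by
  refine ⟨?_, fun h k hk => h k (by omega) (k + 1) hk (Or.inl rfl)⟩
  rintro h j hj k hk (rfl | rfl)
  · exact h j hk
  · exact (h k (by omega)).symm

lemma cycleFloods_iff {n : ℕ} (hn : 0 < n) {S : Finset ℕ} :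
    CycleFloods n S ↔ ∀ j < n, ∀ k < n,
      (j + 1 = k ∨ k + 1 = j) ∨ (j = n - 1 ∧ k = 0 ∨ k = n - 1 ∧ j = 0) → j ∈ S ∨ k ∈ S := by
  constructor
  · rintro ⟨hcover, hclose⟩ j hj k hk (hadj | ⟨rfl, rfl⟩ | ⟨rfl, rfl⟩)
    · exact isPathCover_iff.mp hcover j hj k hk hadj
    · exact hclose
    · exact hclose.symm
  · intro h
    exact ⟨isPathCover_iff.mpr fun j hj k hk hadj => h j hj k hk (Or.inl hadj),
      h (n - 1) (by omega) 0 hn (Or.inr (Or.inl ⟨rfl, rfl⟩))⟩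

section PathGraph

variable {m : ℕ}

lemma deg_pathGraph_le_two (v : Fin m) : deg (pathGraph m) v ≤ 2 := by
  by_contra! h
  obtain ⟨a, ha, b, hb, c, hc, hab, hac, hbc⟩ := two_lt_card.mp h
  simp only [mem_filter, mem_univ, true_and, pathGraph_adj] at ha hb hc
  simp only [ne_eq, Fin.ext_iff] at hab hac hbc
  omega

lemma deg_pathGraph_lt_two_iff (v : Fin m) :
    deg (pathGraph m) v < 2 ↔ v.val = 0 ∨ v.val = m - 1 := by
  have := v.isLt
  rw [deg, Nat.lt_succ_iff, card_le_one]
  simp only [mem_filter, mem_univ, true_and, pathGraph_adj, Fin.ext_iff]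
  refine ⟨fun h => ?_, fun hv a ha b hb => by omega⟩
  by_contra! hv
  have := h ⟨v - 1, by omega⟩ (Or.inr (by simp only; omega)) ⟨v + 1, by omega⟩ (Or.inl rfl)
  simp only at this
  omega

theorem floods_pathGraph_iff (hm : 0 < m) (C : Finset (Fin m)) :
    Floods (pathGraph m) C ↔ PathFloods m (C.image Fin.val) := by
  simp only [floods_iff_of_deg_le_two deg_pathGraph_le_two, deg_pathGraph_lt_two_iff,
    pathGraph_adj, forall_fin_imp_mem_iff C (fun k => k = 0 ∨ k = m - 1),
    forall_fin_imp_mem_or_mem_iff C (fun j k => j + 1 = k ∨ k + 1 = j), PathFloods,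
    ← isPathCover_iff, ← and_assoc]
  refine and_congr_left' ⟨fun h => ⟨h 0 hm (Or.inl rfl), h (m - 1) (by omega) (Or.inr rfl)⟩, ?_⟩
  rintro ⟨h0, h1⟩ k - (rfl | rfl) <;> assumption

end PathGraph

section CycleGraph

variable {n : ℕ}

lemma deg_cycleGraph (hn : 3 ≤ n) (v : Fin n) : deg (cycleGraph n) v = 2 := by
  obtain ⟨n, rfl⟩ : ∃ k, n = k + 3 := ⟨n - 3, by omega⟩
  rw [← cycleGraph_degree_three_le (v := v), ← card_neighborFinset_eq_degree,
    neighborFinset_eq_filter, deg]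
  congr

lemma cycleGraph_adj_iff_val (hn : 2 ≤ n) {u v : Fin n} :
    (cycleGraph n).Adj u v ↔
      (u.val + 1 = v ∨ v.val + 1 = u) ∨
        (u.val = n - 1 ∧ v.val = 0 ∨ v.val = n - 1 ∧ u.val = 0) := by
  have := u.isLt
  have := v.isLt
  rw [cycleGraph_adj']
  rcases lt_trichotomy u v with h | rfl | h
  · rw [Fin.coe_sub_iff_lt.mpr h, Fin.coe_sub_iff_le.mpr h.le]
    rw [Fin.lt_def] at h
    omega
  · rw [Fin.coe_sub_iff_le.mpr le_rfl]
    omega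
  · rw [Fin.coe_sub_iff_lt.mpr h, Fin.coe_sub_iff_le.mpr h.le]
    rw [Fin.lt_def] at h
    omega

theorem floods_cycleGraph_iff (hn : 3 ≤ n) (C : Finset (Fin n)) :
    Floods (cycleGraph n) C ↔ CycleFloods n (C.image Fin.val) := by
  simp only [floods_iff_of_deg_le_two fun v => (deg_cycleGraph hn v).le, deg_cycleGraph hn,
    lt_irrefl, false_imp_iff, implies_true, true_and, cycleGraph_adj_iff_val (by omega : 2 ≤ n)]
  rw [forall_fin_imp_mem_or_mem_iff C
    (fun j k => (j + 1 = k ∨ k + 1 = j) ∨ (j = n - 1 ∧ k = 0 ∨ k = n - 1 ∧ j = 0))]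
  exact (cycleFloods_iff (by omega)).symm

end CycleGraph

def concat (a : ℕ) (A B : Finset ℕ) : Finset ℕ :=
  A ∪ B.map (addLeftEmbedding a)

section Concat

variable {a b : ℕ} {A B : Finset ℕ}

lemma mem_concat_of_lt {k : ℕ} (hk : k < a) : k ∈ concat a A B ↔ k ∈ A := by
  simp only [concat, mem_union, mem_map, addLeftEmbedding_apply, or_iff_left_iff_imp]
  rintro ⟨j, -, rfl⟩
  omega

lemma add_mem_concat (hA : A ⊆ range a) {j : ℕ} : a + j ∈ concat a A B ↔ j ∈ B := by
  have : a + j ∉ A := fun h => by simpa using hA h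
  simp [concat, this]

lemma card_concat (hA : A ⊆ range a) : #(concat a A B) = #A + #B := by
  rw [concat, card_union_of_disjoint, card_map]
  refine disjoint_left.mpr fun k hkA hkB => ?_
  obtain ⟨j, -, rfl⟩ := mem_map.mp hkB
  simpa using hA hkA

theorem sum_powerset_range_add {M : Type*} [AddCommMonoid M] (a b : ℕ) (f : Finset ℕ → M) :
    ∑ S ∈ (range (a + b)).powerset, f S =
      ∑ A ∈ (range a).powerset, ∑ B ∈ (range b).powerset, f (concat a A B) := by
  rw [← sum_product']
  symm
  refine sum_nbij' (fun p => concat a p.1 p.2)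
    (fun S => (S.filter (· < a), (range b).filter (fun j => a + j ∈ S))) ?_ ?_ ?_ ?_ fun _ _ => rfl
  · rintro ⟨A, B⟩ hAB
    obtain ⟨hA, hB⟩ := mem_product.mp hAB
    refine mem_powerset.mpr fun k hk => ?_
    simp only [concat, mem_union, mem_map, addLeftEmbedding_apply] at hk
    rcases hk with hk | ⟨j, hj, rfl⟩
    · simpa using (mem_range.mp (mem_powerset.mp hA hk)).trans_le (Nat.le_add_right a b)
    · simpa using mem_range.mp (mem_powerset.mp hB hj)
  · intro S _
    exact mem_product.mpr ⟨mem_powerset.mpr fun k hk => mem_range.mpr (mem_filter.mp hk).2,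
      mem_powerset.mpr (filter_subset _ _)⟩
  · rintro ⟨A, B⟩ hAB
    obtain ⟨hA, hB⟩ := mem_product.mp hAB
    rw [mem_powerset] at hA hB
    ext k
    · simp only [mem_filter]
      exact ⟨fun h => (mem_concat_of_lt h.2).mp h.1,
        fun h => ⟨(mem_concat_of_lt (mem_range.mp (hA h))).mpr h, mem_range.mp (hA h)⟩⟩
    · simp only [mem_filter, add_mem_concat hA]
      exact ⟨fun h => h.2, fun h => ⟨hB h, h⟩⟩
  · intro S hS
    ext k
    rcases lt_or_ge k a with hk | hk
    · simp [mem_concat_of_lt hk, hk]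
    · obtain ⟨j, rfl⟩ := Nat.exists_eq_add_of_le hk
      rw [add_mem_concat fun k hk => mem_range.mpr (mem_filter.mp hk).2, mem_filter, mem_range]
      exact ⟨fun h => h.2, fun h => ⟨by simpa using mem_powerset.mp hS h, h⟩⟩

theorem isPathCover_concat_iff (hA : A ⊆ range a) (ha : 0 < a) (hb : 0 < b) :
    IsPathCover (a + b) (concat a A B) ↔
      IsPathCover a A ∧ IsPathCover b B ∧ (a - 1 ∈ A ∨ 0 ∈ B) := by
  have hjoin : a - 1 + 1 = a + 0 := by omega
  constructor
  · intro h
    refine ⟨fun k hk => ?_, fun j hj => ?_, ?_⟩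
    · simpa only [mem_concat_of_lt (by omega : k < a), mem_concat_of_lt hk] using h k (by omega)
    · simpa only [add_mem_concat hA, add_assoc] using h (a + j) (by omega)
    · simpa only [mem_concat_of_lt (by omega : a - 1 < a), hjoin, add_mem_concat hA]
        using h (a - 1) (by omega)
  · rintro ⟨hcoverA, hcoverB, hmid⟩ k hk
    rcases lt_trichotomy (k + 1) a with hk' | hk' | hk'
    · rw [mem_concat_of_lt (by omega), mem_concat_of_lt hk']
      exact hcoverA k hk'
    · obtain rfl : k = a - 1 := by omega
      rwa [mem_concat_of_lt (by omega), hjoin, add_mem_concat hA]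
    · obtain ⟨j, rfl⟩ : ∃ j, k = a + j := ⟨k - a, by omega⟩
      rw [add_mem_concat hA, add_assoc, add_mem_concat hA]
      exact hcoverB j (by omega)

theorem pathFloods_concat_iff (hA : A ⊆ range a) (ha : 0 < a) (hb : 0 < b) :
    PathFloods (a + b) (concat a A B) ↔
      0 ∈ A ∧ b - 1 ∈ B ∧ IsPathCover a A ∧ IsPathCover b B ∧ (a - 1 ∈ A ∨ 0 ∈ B) := by
  rw [PathFloods, isPathCover_concat_iff hA ha hb, mem_concat_of_lt ha,
    show a + b - 1 = a + (b - 1) by omega, add_mem_concat hA]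

end Concat

theorem pathFloods_concat_self_iff {n : ℕ} {A B : Finset ℕ} (hA : A ⊆ range n) (hn : 0 < n) :
    PathFloods (n + n) (concat n A B) ↔
      PathFloods n A ∧ CycleFloods n B ∧ n - 1 ∈ B ∨
        PathFloods n B ∧ CycleFloods n A ∧ n - 1 ∉ A := by
  rw [pathFloods_concat_iff hA hn hn, PathFloods, PathFloods, CycleFloods, CycleFloods]
  by_cases h : n - 1 ∈ A <;> tauto

-- Pairs with `r B` give product terms directly, pairs with `¬ r A` after swapping `A` and `B`.
theorem sum_sum_ite_eq_mul {α R : Type*} [CommSemiring R] (s : Finset α) (p q r : α → Prop)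
    (Q : α → α → Prop) (w : α → R) (hpr : ∀ A, p A → r A)
    (hQ : ∀ A ∈ s, ∀ B ∈ s, Q A B ↔ p A ∧ q B ∧ r B ∨ p B ∧ q A ∧ ¬ r A) :
    ∑ A ∈ s, ∑ B ∈ s, (if Q A B then w A * w B else 0) =
      (∑ A ∈ s, if p A then w A else 0) * ∑ B ∈ s, if q B then w B else 0 := by
  have hsplit : ∀ A ∈ s, ∀ B ∈ s, (if Q A B then w A * w B else 0) =
      (if p A ∧ q B ∧ r B then w A * w B else 0) + if p B ∧ q A ∧ ¬ r A then w B * w A else 0 := by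
    intro A hA B hB
    have := hpr A
    simp only [hQ A hA B hB, mul_comm (w B)]
    split_ifs <;> simp_all
  rw [sum_congr rfl fun A hA => sum_congr rfl fun B hB => hsplit A hA B hB]
  simp only [sum_add_distrib]
  rw [sum_comm (f := fun A B => if p B ∧ q A ∧ ¬ r A then w B * w A else 0), ← sum_add_distrib,
    sum_mul_sum]
  refine sum_congr rfl fun A _ => ?_
  rw [← sum_add_distrib]
  refine sum_congr rfl fun B _ => ?_
  rw [ite_zero_mul_ite_zero]
  by_cases hrB : r B <;> simp [hrB]

theorem floodPoly_path_two_mul (n : ℕ) (hn : 3 ≤ n) :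
    floodPoly (SimpleGraph.pathGraph (2 * n)) =
      floodPoly (SimpleGraph.pathGraph n) * floodPoly (SimpleGraph.cycleGraph n) := by
  have hpath {m : ℕ} (hm : 0 < m) := floodPoly_eq_sum_powerset_range _ _ (floods_pathGraph_iff hm)
  rw [hpath (by omega), hpath (by omega),
    floodPoly_eq_sum_powerset_range _ _ (floods_cycleGraph_iff hn), sum_filter, sum_filter,
    sum_filter, two_mul, sum_powerset_range_add]
  rw [← sum_sum_ite_eq_mul _ _ _ (fun A => n - 1 ∈ A)
    (fun A B => PathFloods (n + n) (concat n A B)) _ (fun _ hA => hA.2.1)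
    fun A hA B _ => pathFloods_concat_self_iff (mem_powerset.mp hA) (by omega)]
  refine sum_congr rfl fun A hA => sum_congr rfl fun B _ => ?_
  rw [card_concat (mem_powerset.mp hA), pow_add]
end
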